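/- Let per = 010^e with e ≥ 3 over {0,1} with complement σ↦1−σ, and let q ∈ 0101·Σ*·11(1̄1̄)·Σ*·(1̄0̄0̄1̄0̄). For all positive integers a ≥ k, the hairpin completion distance from per^k · q · ⟵per^k to per^a · q · ⟵per^a equals Fib⁻¹(a/k), the least y with Fib(y) ≥ a/k. -/

import Mathlib

def Fib : ℕ → ℕ
  | 0 => 1
  | 1 => 1
  | n + 2 => Fib (n + 1) + Fib n

noncomputable def FibInv (x : ℝ) : ℕ := sInf {y : ℕ | x ≤ (Fib y : ℝ)}

def FibRegular (a : ℕ) : Prop :=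
  ∀ k : ℕ, 2 ≤ k → k ≤ a → FibInv (a : ℝ) ≤ FibInv ((a : ℝ) / (k : ℝ)) + k - 1

/-- characterwise complement followed by reversal: the "reverse complement" ⟵w -/
def rc (w : List Bool) : List Bool := (w.map (fun b => !b)).reverse

/-- one (modified) hairpin deletion step: remove a prefix (left) or suffix (right)
of length `ℓ ∈ [⌊|S|/2⌋]` that equals the reverse complement of the opposite end. -/
def HDel (S T : List Bool) : Prop :=
  ∃ ℓ, 1 ≤ ℓ ∧ ℓ ≤ S.length / 2 ∧ S.take ℓ = rc (S.drop (S.length - ℓ)) ∧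
    (T = S.drop ℓ ∨ T = S.take (S.length - ℓ))

/-- `HDelN n S T`: `T` is obtained from `S` by exactly `n` hairpin deletions. -/
def HDelN : ℕ → List Bool → List Bool → Prop
  | 0, S, T => S = T
  | n + 1, S, T => ∃ U, HDel S U ∧ HDelN n U T

/-- hairpin deletion distance (∞ if unreachable) -/
noncomputable def HDD (x y : List Bool) : ℕ∞ :=
  sInf {n : ℕ∞ | ∃ m : ℕ, n = (m : ℕ∞) ∧ HDelN m x y}

/-- one (modified) hairpin completion step -/
def HComp (S T : List Bool) : Prop :=
  ∃ ℓ, 1 ≤ ℓ ∧ ℓ ≤ S.length ∧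
    (T = S ++ rc (S.take ℓ) ∨ T = rc (S.drop (S.length - ℓ)) ++ S)

def HCompN : ℕ → List Bool → List Bool → Prop
  | 0, S, T => S = T
  | n + 1, S, T => ∃ U, HComp S U ∧ HCompN n U T

/-- hairpin completion distance (∞ if unreachable) -/
noncomputable def HCD (x y : List Bool) : ℕ∞ :=
  sInf {n : ℕ∞ | ∃ m : ℕ, n = (m : ℕ∞) ∧ HCompN m x y}

/-- `w` concatenated with itself `k` times, `w^k` -/
def repL (w : List Bool) (k : ℕ) : List Bool := (List.replicate k w).flatten

/-!
Write `P = e + 2` and `X n = per^n q ⟵per^n`. A completion of length `t P` copies `t` whole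
blocks, turning `per^i q ⟵per^j` into `per^i q ⟵per^(j+t)` for `t ≤ i` (and symmetrically);
repeatedly extending the shorter flank by the longer one gives flanks of `Fib m k` and
`Fib (m+1) k` blocks after `m` steps, and two more steps reach `X a` as soon as
`a ≤ Fib (m+2) k`.

Conversely, completions only extend words, so every word of a completion sequence from `X k`
to `X a` is a factor of `X a`. The first `11` of `X a`, and of its reverse complement, lies in
`q`, so each such word is a window of `X a` around its unique `q`. A right completion of length
`ℓ` glues the reverse complement of a prefix onto the `⟵per`-periodic right flank, so that
prefix is periodic: it cannot contain both ones of `q` at positions `1` and `3` (or `4`, for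
`⟵q`), and if it reaches the first one of the left flank its phase is that of the flank. Either
way the new right flank has at most as many blocks (rounded up) as the two old flanks together,
so the block counts grow no faster than consecutive Fibonacci multiples of `k`.
-/

/-! ### Lists, reverse complements and powers -/

theorem getD_take_of_lt {α : Type*} {w : List α} {i n : ℕ} {d : α} (h : i < n) :
    (w.take n).getD i d = w.getD i d := by
  rw [List.getD_eq_getElem?_getD, List.getElem?_take_of_lt h, ← List.getD_eq_getElem?_getD]

theorem lt_length_of_getD_eq_true {w : List Bool} {i : ℕ} (h : w.getD i false = true) :
    i < w.length := by
  by_contra hi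
  rw [List.getD_eq_default _ _ (by omega)] at h
  exact Bool.false_ne_true h

theorem eq_take_drop_of_append_eq {α : Type*} {l A X B : List α} (h : A ++ X ++ B = l) :
    X = (l.drop A.length).take X.length := by
  simp [← h]

@[simp] theorem rc_length (w : List Bool) : (rc w).length = w.length := by simp [rc]

@[simp] theorem rc_append (w v : List Bool) : rc (w ++ v) = rc v ++ rc w := by simp [rc]

@[simp] theorem rc_rc (w : List Bool) : rc (rc w) = w := by
  simp [rc, List.map_reverse, Function.comp_def]

theorem take_rc (w : List Bool) (n : ℕ) : (rc w).take n = rc (w.drop (w.length - n)) := by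
  simp [rc, List.take_reverse, List.map_drop]

theorem drop_rc (w : List Bool) (n : ℕ) : (rc w).drop n = rc (w.take (w.length - n)) := by
  simp [rc, List.drop_reverse, List.map_take]

theorem List.IsInfix.rc {w v : List Bool} (h : w <:+: v) : rc w <:+: rc v :=
  (h.map _).reverse

theorem repL_succ (w : List Bool) (n : ℕ) : repL w (n + 1) = w ++ repL w n := by
  simp [repL, List.replicate_succ]

theorem repL_add (w : List Bool) (m n : ℕ) : repL w (m + n) = repL w m ++ repL w n := by
  simp only [repL, List.replicate_add, List.flatten_append]

@[simp] theorem repL_length (w : List Bool) (n : ℕ) : (repL w n).length = n * w.length := by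
  simp [repL, List.length_flatten, List.sum_replicate]

theorem rc_repL (w : List Bool) (n : ℕ) : rc (repL w n) = repL (rc w) n := by
  induction n with
  | zero => rfl
  | succ n ih => rw [repL_succ, rc_append, ih, repL_add _ n 1]; simp [repL]

theorem getD_repL (w : List Bool) (n i : ℕ) (hi : i < n * w.length) :
    (repL w n).getD i false = w.getD (i % w.length) false := by
  induction n generalizing i with
  | zero => simp at hi
  | succ n ih =>
    rw [repL_succ]
    rcases lt_or_ge i w.length with h | h
    · rw [List.getD_append _ _ _ _ h, Nat.mod_eq_of_lt h]
    · rw [List.getD_append_right _ _ _ _ h, ih _ (by rw [Nat.succ_mul] at hi; omega),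
        ← Nat.mod_eq_sub_mod h]

/-! ### Completion sequences -/

theorem HComp.rc {S T : List Bool} (h : HComp S T) : HComp (rc S) (rc T) := by
  obtain ⟨ℓ, hℓ₁, hℓ, rfl | rfl⟩ := h
  · refine ⟨ℓ, hℓ₁, by rwa [rc_length], Or.inr ?_⟩
    rw [rc_append, rc_rc, rc_length, drop_rc, rc_rc, Nat.sub_sub_self hℓ]
  · exact ⟨ℓ, hℓ₁, by rwa [rc_length], Or.inl (by rw [rc_append, rc_rc, take_rc, rc_rc])⟩

theorem HComp.infix {S T : List Bool} (h : HComp S T) : S <:+: T := by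
  obtain ⟨ℓ, -, -, rfl | rfl⟩ := h
  · exact List.infix_append_left
  · exact List.infix_append_right

theorem hCompN_succ_iff {m : ℕ} {S T : List Bool} :
    HCompN (m + 1) S T ↔ ∃ U, HCompN m S U ∧ HComp U T := by
  induction m generalizing S with
  | zero =>
    constructor
    · rintro ⟨U, h, rfl⟩; exact ⟨S, rfl, h⟩
    · rintro ⟨U, rfl, h⟩; exact ⟨T, h, rfl⟩
  | succ m ih =>
    constructor
    · rintro ⟨V, hSV, hVT⟩
      obtain ⟨U, hVU, hUT⟩ := ih.mp hVT
      exact ⟨U, ⟨V, hSV, hVU⟩, hUT⟩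
    · rintro ⟨U, ⟨V, hSV, hVU⟩, hUT⟩
      exact ⟨V, hSV, ih.mpr ⟨U, hVU, hUT⟩⟩

theorem HCD_eq_of_minimal {x y : List Bool} {n : ℕ} (hn : HCompN n x y)
    (hmin : ∀ m, HCompN m x y → n ≤ m) : HCD x y = n :=
  le_antisymm (sInf_le ⟨n, rfl, hn⟩)
    (le_sInf fun _ ⟨m, hm, h⟩ => hm ▸ by exact_mod_cast hmin m h)

/-! ### Fibonacci numbers -/

theorem Fib_eq_fib : ∀ n, Fib n = Nat.fib (n + 1)
  | 0 => rfl
  | 1 => rfl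
  | n + 2 => by rw [Fib, Fib_eq_fib (n + 1), Fib_eq_fib n, Nat.fib_add_two (n := n + 1)]; ring

theorem Fib_pos (n : ℕ) : 0 < Fib n := by
  rw [Fib_eq_fib]; exact Nat.fib_pos.mpr n.succ_pos

theorem Fib_mono : Monotone Fib := fun m n h => by
  simpa only [Fib_eq_fib] using Nat.fib_mono (Nat.succ_le_succ h)

theorem le_Fib (n : ℕ) : n ≤ Fib n := by
  have := Nat.le_fib_add_one (n + 1); rw [Fib_eq_fib]; omega

theorem FibInv_natCast_div {a k : ℕ} (hk : 0 < k) :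
    FibInv ((a : ℝ) / (k : ℝ)) = sInf {y | a ≤ Fib y * k} := by
  have hk' : (0 : ℝ) < k := by exact_mod_cast hk
  simp only [FibInv, div_le_iff₀ hk']
  norm_cast

def FibBound (c m X Y : ℕ) : Prop :=
  min X Y ≤ Fib m * c ∧ max X Y ≤ Fib (m + 1) * c

theorem FibBound.symm {c m X Y : ℕ} (h : FibBound c m X Y) : FibBound c m Y X := by
  rwa [FibBound, min_comm, max_comm]

theorem FibBound.succ_of_le_add {c m X Y Y' : ℕ} (h : FibBound c m X Y) (hY' : Y' ≤ X + Y) :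
    FibBound c (m + 1) X Y' := by
  have hFib : Fib (m + 1 + 1) * c = Fib (m + 1) * c + Fib m * c := add_mul _ _ _
  have hmono : Fib (m + 1) * c ≤ Fib (m + 1 + 1) * c := Nat.mul_le_mul_right c (Fib_mono (by omega))
  have hsum := min_add_max X Y
  have hX := le_max_left X Y
  obtain ⟨hmin, hmax⟩ := h
  exact ⟨(min_le_left _ _).trans (hX.trans hmax), max_le (by omega) (by omega)⟩

/-! ### Periodic prefixes -/

theorem eq_of_natCast_eq {P m n : ℕ} (h : (m : ZMod P) = n) (hm : m < P) (hn : n < P) :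
    m = n := by
  rwa [ZMod.natCast_eq_natCast_iff', Nat.mod_eq_of_lt hm, Nat.mod_eq_of_lt hn] at h

theorem le_mul_add_of_natCast_eq {P n₁ n₂ m X Y : ℕ} (hP : 5 ≤ P) (h : (m : ZMod P) = n₁)
    (hm : m ≤ n₁ + n₂ + 4) (hX : n₁ ≤ P * X) (hY : n₂ ≤ P * Y) : m ≤ P * (X + Y) := by
  rcases le_or_gt m n₁ with hle | hlt
  · nlinarith
  · obtain ⟨t, ht⟩ :=
      (Nat.modEq_iff_dvd' hlt.le).mp ((ZMod.natCast_eq_natCast_iff _ _ _).mp h.symm)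
    replace ht : m = n₁ + P * t := by omega
    have htY : t ≤ Y := by
      by_contra! htY
      have : P * (Y + 1) ≤ P * t := Nat.mul_le_mul_left P htY
      nlinarith
    have : P * t ≤ P * Y := Nat.mul_le_mul_left P htY
    nlinarith

theorem le_mul_add_of_forall_natCast_ne {P n ℓ X Y : ℕ} (hP : 2 ≤ P) (hX : 1 ≤ X)
    (hY : n ≤ P * Y) (h : ∀ i < ℓ, (i : ZMod P) ≠ (n + ℓ : ℕ) + 1) : n + ℓ ≤ P * (X + Y) := by
  have hr : ℓ ≤ (n + ℓ + 1) % P := by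
    by_contra! hr
    exact h _ hr (by rw [ZMod.natCast_mod]; push_cast; ring)
  have hdiv := Nat.div_add_mod (n + ℓ + 1) P
  have hrP := Nat.mod_lt (n + ℓ + 1) (by omega : 0 < P)
  have htY : (n + ℓ + 1) / P ≤ Y := by
    by_contra! htY
    have : P * (Y + 1) ≤ P * ((n + ℓ + 1) / P) := Nat.mul_le_mul_left P htY
    nlinarith
  have : P * ((n + ℓ + 1) / P) ≤ P * Y := Nat.mul_le_mul_left P htY
  nlinarith

/-- `s` models a window whose left flank is the suffix of length `n₁` of `per^a`, whose core has
ones at `1` and `d`, and whose prefix of length `ℓ` is the reverse complement of the letters that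
a right completion appends to a right flank of length `n₂`. -/
theorem le_mul_add_of_periodic_prefix {P n₁ n₂ ℓ d X Y : ℕ} {s : ℕ → Bool} (hP : 5 ≤ P)
    (hleft : ∀ i < n₁, s i = decide ((i : ZMod P) = n₁ + 1))
    (hone : s (n₁ + 1) = true) (hd : s (n₁ + d) = true) (hd₂ : 2 ≤ d) (hd₄ : d ≤ 4)
    (hmatch : ∀ i < ℓ, s i = decide ((i : ZMod P) = (n₂ + ℓ : ℕ) + 1))
    (hn₁ : P ≤ n₁) (hX : n₁ ≤ P * X) (hY : n₂ ≤ P * Y) : n₂ + ℓ ≤ P * (X + Y) := by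
  -- the ones of the core at `n₁ + 1` and `n₁ + d` are too close to both lie in a periodic prefix
  have hℓ : ℓ ≤ n₁ + d := by
    by_contra! hℓ
    have h₁ := hmatch (n₁ + 1) (by omega)
    have h₂ := hmatch (n₁ + d) (by omega)
    rw [hone, eq_comm, decide_eq_true_iff] at h₁
    rw [hd, eq_comm, decide_eq_true_iff] at h₂
    have h₁₂ : ((1 : ℕ) : ZMod P) = (d : ℕ) := by push_cast at h₁ h₂ ⊢; linear_combination h₁ - h₂
    have := eq_of_natCast_eq h₁₂ (by omega) (by omega)
    omega
  have hr : (((n₁ + 1) % P : ℕ) : ZMod P) = n₁ + 1 := by rw [ZMod.natCast_mod]; push_cast; rfl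
  have hrP := Nat.mod_lt (n₁ + 1) (by omega : 0 < P)
  rcases lt_or_ge ((n₁ + 1) % P) ℓ with hrℓ | hℓr
  · -- the first `1` of the left flank lies in the matched prefix, so the phases agree
    have hs : s ((n₁ + 1) % P) = true := by rw [hleft _ (by omega), hr]; exact decide_eq_true rfl
    rw [hmatch _ hrℓ, decide_eq_true_iff, hr] at hs
    refine le_mul_add_of_natCast_eq hP ?_ (by omega) hX hY
    push_cast at hs ⊢; linear_combination -hs
  · refine le_mul_add_of_forall_natCast_ne (by omega) ?_ hY fun i hi hi' => ?_
    · exact Nat.one_le_iff_ne_zero.mpr (by rintro rfl; omega)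
    have hs : s i = true := by rw [hmatch i hi]; exact decide_eq_true hi'
    rw [hleft i (by omega), decide_eq_true_iff, ← hr] at hs
    have := eq_of_natCast_eq hs (by omega) hrP
    omega

/-! ### Windows around the core -/

def perBlock (e : ℕ) : List Bool := [false, true] ++ List.replicate e false

@[simp] theorem perBlock_length (e : ℕ) : (perBlock e).length = e + 2 := by
  simp [perBlock]

theorem length_repL_perBlock (e a : ℕ) : (repL (perBlock e) a).length = (e + 2) * a := by
  simp [mul_comm]

theorem length_repL_rc_perBlock (e a : ℕ) : (repL (rc (perBlock e)) a).length = (e + 2) * a := by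
  simp [mul_comm]

theorem length_drop_repL_perBlock {e a n : ℕ} (hn : n ≤ (e + 2) * a) :
    ((repL (perBlock e) a).drop ((e + 2) * a - n)).length = n := by
  simp only [List.length_drop, length_repL_perBlock]; omega

theorem getD_perBlock (e i : ℕ) : (perBlock e).getD i false = decide (i = 1) :=
  match i with
  | 0 | 1 => rfl
  | i + 2 => by rw [perBlock, List.getD_append_right _ _ _ _ (by simp)]; simp

theorem getD_repL_perBlock {e a i : ℕ} (hi : i < (e + 2) * a) :
    (repL (perBlock e) a).getD i false = decide ((i : ZMod (e + 2)) = 1) := by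
  rw [getD_repL _ _ _ (by simpa [mul_comm] using hi), perBlock_length, getD_perBlock]
  refine decide_eq_decide.mpr ?_
  rw [← Nat.cast_one (R := ZMod (e + 2)), ZMod.natCast_eq_natCast_iff',
    Nat.one_mod_eq_one.mpr (by omega)]

theorem getD_drop_repL_perBlock {e a n i : ℕ} (hn : n ≤ (e + 2) * a) (hi : i < n) :
    ((repL (perBlock e) a).drop ((e + 2) * a - n)).getD i false
      = decide ((i : ZMod (e + 2)) = n + 1) := by
  rw [List.getD_eq_getElem?_getD, List.getElem?_drop, ← List.getD_eq_getElem?_getD,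
    getD_repL_perBlock (by omega)]
  have hP : (((e + 2) * a : ℕ) : ZMod (e + 2)) = 0 := by simp
  push_cast [Nat.cast_sub hn] at hP ⊢
  rw [hP]
  exact decide_eq_decide.mpr ⟨fun h => by linear_combination h, fun h => by linear_combination h⟩

def framed (e : ℕ) (q : List Bool) (i j : ℕ) : List Bool :=
  repL (perBlock e) i ++ q ++ repL (rc (perBlock e)) j

/-- The factor of `framed e q a a` made of `q` and the `n₁` letters before and `n₂` letters
after it. -/
def window (e : ℕ) (q : List Bool) (a n₁ n₂ : ℕ) : List Bool :=
  (repL (perBlock e) a).drop ((e + 2) * a - n₁) ++ q ++ (repL (rc (perBlock e)) a).take n₂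

theorem length_window {e a n₁ n₂ : ℕ} (q : List Bool) (hn₁ : n₁ ≤ (e + 2) * a)
    (hn₂ : n₂ ≤ (e + 2) * a) : (window e q a n₁ n₂).length = n₁ + q.length + n₂ := by
  simp only [window, List.length_append, List.length_drop, List.length_take,
    length_repL_perBlock, length_repL_rc_perBlock]
  omega

theorem rc_framed (e : ℕ) (q : List Bool) (i j : ℕ) :
    rc (framed e q i j) = framed e (rc q) j i := by
  simp [framed, rc_repL]

theorem rc_window (e : ℕ) (q : List Bool) (a n₁ n₂ : ℕ) :
    rc (window e q a n₁ n₂) = window e (rc q) a n₂ n₁ := by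
  have h₁ : rc ((repL (rc (perBlock e)) a).take n₂)
      = (repL (perBlock e) a).drop ((e + 2) * a - n₂) := by
    rw [← rc_repL, take_rc, rc_rc, length_repL_perBlock]
  have h₂ : rc ((repL (perBlock e) a).drop ((e + 2) * a - n₁))
      = (repL (rc (perBlock e)) a).take n₁ := by
    rw [← rc_repL, take_rc, length_repL_perBlock]
  simp only [window, rc_append, h₁, h₂, List.append_assoc]

theorem window_eq_take_drop {e a n₁ : ℕ} (q : List Bool) (n₂ : ℕ) (hn₁ : n₁ ≤ (e + 2) * a) :
    window e q a n₁ n₂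
      = ((framed e q a a).drop ((e + 2) * a - n₁)).take (n₁ + q.length + n₂) := by
  have hL := length_drop_repL_perBlock (e := e) hn₁
  rw [framed, List.append_assoc,
    List.drop_append_of_le_length (by rw [length_repL_perBlock]; omega), window, List.append_assoc]
  nth_rewrite 2 [← hL]
  rw [add_assoc, List.take_length_add_append, List.take_length_add_append]

theorem window_eq_framed {e k a : ℕ} (q : List Bool) (hka : k ≤ a) :
    window e q a ((e + 2) * k) ((e + 2) * k) = framed e q k k := by
  obtain ⟨d, rfl⟩ := Nat.exists_eq_add_of_le hka
  have h₁ : (e + 2) * (k + d) - (e + 2) * k = (repL (perBlock e) d).length := by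
    rw [length_repL_perBlock]; ring_nf; omega
  have h₂ : (e + 2) * k = (repL (rc (perBlock e)) k).length := by
    rw [length_repL_rc_perBlock]
  rw [window, framed, h₁, add_comm k d, repL_add, List.drop_left, add_comm d k, repL_add, h₂,
    List.take_left]

theorem getD_window_left {e a n₁ n₂ i : ℕ} (q : List Bool) (hn₁ : n₁ ≤ (e + 2) * a)
    (hi : i < n₁) :
    (window e q a n₁ n₂).getD i false = decide ((i : ZMod (e + 2)) = n₁ + 1) := by
  rw [window, List.append_assoc,
    List.getD_append _ _ _ _ ((length_drop_repL_perBlock hn₁).symm ▸ hi),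
    getD_drop_repL_perBlock hn₁ hi]

theorem getD_window_core {e a n₁ n₂ j : ℕ} (q : List Bool) (hn₁ : n₁ ≤ (e + 2) * a)
    (hj : j < q.length) : (window e q a n₁ n₂).getD (n₁ + j) false = q.getD j false := by
  have hL := length_drop_repL_perBlock (e := e) hn₁
  rw [window, List.getD_append _ _ _ _ (by simp only [List.length_append, hL]; omega),
    List.getD_append_right _ _ _ _ (by omega), hL, Nat.add_sub_cancel_left]

def OneOneAt (w : List Bool) (i : ℕ) : Prop :=
  w.getD i false = true ∧ w.getD (i + 1) false = true

theorem oneOneAt_framed {e a i : ℕ} {q : List Bool} (he : 1 ≤ e)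
    (h : OneOneAt (framed e q a a) i) (hi : i + 1 < (e + 2) * a + q.length) :
    (e + 2) * a ≤ i ∧ OneOneAt q (i - (e + 2) * a) := by
  rw [← window_eq_framed q le_rfl] at h
  obtain ⟨h₁, h₂⟩ := h
  by_cases hai : (e + 2) * a ≤ i
  · obtain ⟨m, rfl⟩ := Nat.exists_eq_add_of_le hai
    rw [getD_window_core q le_rfl (by omega)] at h₁
    rw [add_assoc, getD_window_core q le_rfl (by omega)] at h₂
    exact ⟨hai, by rw [Nat.add_sub_cancel_left]; exact ⟨h₁, h₂⟩⟩
  · exfalso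
    have hP : (((e + 2) * a : ℕ) : ZMod (e + 2)) = 0 := by simp
    rw [getD_window_left q le_rfl (not_le.mp hai), hP, zero_add, decide_eq_true_iff] at h₁
    have h₂ : ((2 : ℕ) : ZMod (e + 2)) = (1 : ℕ) ∨ ((2 : ℕ) : ZMod (e + 2)) = (0 : ℕ) := by
      rcases lt_or_ge (i + 1) ((e + 2) * a) with hlt | hge
      · rw [getD_window_left q le_rfl hlt, hP, zero_add, decide_eq_true_iff] at h₂
        left
        push_cast at h₂ ⊢
        rw [← h₂, h₁]; ring
      · right
        rw [Nat.cast_zero, ← hP, show (e + 2) * a = i + 1 by omega]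
        push_cast [h₁]; ring
    rcases h₂ with h₂ | h₂ <;> exact absurd (eq_of_natCast_eq h₂ (by omega) (by omega)) (by omega)

theorem le_length_of_framed_eq_append {e a : ℕ} {q A B : List Bool} (he : 1 ≤ e)
    (hq : ∃ f, OneOneAt q f) (h : framed e q a a = A ++ q ++ B) : (e + 2) * a ≤ A.length := by
  classical
  have hf := Nat.find_spec hq
  have hfq := lt_length_of_getD_eq_true hf.2
  have hcore : ∀ j < q.length, (framed e q a a).getD (A.length + j) false = q.getD j false :=
    fun j hj => by
      rw [h, List.append_assoc, List.getD_append_right _ _ _ _ (by omega),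
        List.getD_append _ _ _ _ (by omega), Nat.add_sub_cancel_left]
  have hA : OneOneAt (framed e q a a) (A.length + Nat.find hq) :=
    ⟨(hcore _ (by omega)).trans hf.1, (hcore (Nat.find hq + 1) hfq).trans hf.2⟩
  rcases lt_or_ge (A.length + Nat.find hq + 1) ((e + 2) * a + q.length) with hlt | hge
  · obtain ⟨hle, hA'⟩ := oneOneAt_framed he hA hlt
    have := Nat.find_min' hq hA'
    omega
  · omega

theorem length_eq_of_framed_eq_append {e a : ℕ} {q A B : List Bool} (he : 1 ≤ e)
    (hq : ∃ f, OneOneAt q f) (hq' : ∃ f, OneOneAt (rc q) f) (h : framed e q a a = A ++ q ++ B) :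
    A.length = (e + 2) * a := by
  have hA := le_length_of_framed_eq_append he hq h
  have hB : (e + 2) * a ≤ (rc B).length := by
    refine le_length_of_framed_eq_append he hq' (B := rc A) ?_
    rw [← rc_framed, h]; simp [List.append_assoc]
  have hlen := congrArg List.length h
  simp only [framed, List.length_append, length_repL_perBlock, length_repL_rc_perBlock] at hlen
  rw [rc_length] at hB
  omega

theorem window_append_of_infix {e a n₁ n₂ : ℕ} {q R : List Bool} (he : 1 ≤ e)
    (hq : ∃ f, OneOneAt q f) (hq' : ∃ f, OneOneAt (rc q) f)
    (hn₁ : n₁ ≤ (e + 2) * a) (hn₂ : n₂ ≤ (e + 2) * a)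
    (h : window e q a n₁ n₂ ++ R <:+: framed e q a a) :
    n₂ + R.length ≤ (e + 2) * a ∧ window e q a n₁ n₂ ++ R = window e q a n₁ (n₂ + R.length) := by
  obtain ⟨A, B, hAB⟩ := h
  have hpos : (A ++ (repL (perBlock e) a).drop ((e + 2) * a - n₁)).length = (e + 2) * a := by
    refine length_eq_of_framed_eq_append he hq hq'
      (B := (repL (rc (perBlock e)) a).take n₂ ++ R ++ B) ?_
    rw [← hAB, window]; simp only [List.append_assoc]
  rw [List.length_append, length_drop_repL_perBlock hn₁] at hpos
  have hlen := congrArg List.length hAB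
  simp only [framed, window, List.length_append, length_drop_repL_perBlock hn₁, List.length_take,
    length_repL_perBlock, length_repL_rc_perBlock] at hlen
  have hR : n₂ + R.length ≤ (e + 2) * a := by omega
  refine ⟨hR, ?_⟩
  rw [eq_take_drop_of_append_eq hAB, List.length_append, length_window q hn₁ hn₂,
    window_eq_take_drop q _ hn₁, show A.length = (e + 2) * a - n₁ by omega, add_assoc]

/-! ### Lower bound -/

def Marked (q : List Bool) : Prop :=
  q.getD 1 false = true ∧ ∃ d, 2 ≤ d ∧ d ≤ 4 ∧ q.getD d false = true

theorem window_append_rc_take {e a n₁ n₂ ℓ X Y : ℕ} {q : List Bool} (he : 3 ≤ e)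
    (hq : Marked q) (hq₂ : ∃ f, OneOneAt q f) (hq₂' : ∃ f, OneOneAt (rc q) f)
    (hn₁ : n₁ ≤ (e + 2) * a) (hn₂ : n₂ ≤ (e + 2) * a) (hℓ : ℓ ≤ (window e q a n₁ n₂).length)
    (hP : e + 2 ≤ n₁) (hX : n₁ ≤ (e + 2) * X) (hY : n₂ ≤ (e + 2) * Y)
    (h : window e q a n₁ n₂ ++ rc ((window e q a n₁ n₂).take ℓ) <:+: framed e q a a) :
    window e q a n₁ n₂ ++ rc ((window e q a n₁ n₂).take ℓ) = window e q a n₁ (n₂ + ℓ) ∧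
      n₂ + ℓ ≤ (e + 2) * a ∧ n₂ + ℓ ≤ (e + 2) * (X + Y) := by
  set S := window e q a n₁ n₂
  have hlen : (rc (S.take ℓ)).length = ℓ := by simp only [rc_length, List.length_take]; omega
  obtain ⟨hR, hT⟩ := window_append_of_infix (by omega) hq₂ hq₂' hn₁ hn₂ h
  rw [hlen] at hR hT
  refine ⟨hT, hR, ?_⟩
  have htake : S.take ℓ = (window e (rc q) a (n₂ + ℓ) n₁).take ℓ := by
    rw [← rc_window, ← hT, rc_append, rc_rc, List.take_left' (by simp; omega)]
  obtain ⟨hone, d, hd₂, hd₄, hd⟩ := hq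
  have hdq := lt_length_of_getD_eq_true hd
  refine le_mul_add_of_periodic_prefix (s := fun i => S.getD i false) (by omega)
    (fun i hi => getD_window_left q hn₁ hi) ?_ ?_ hd₂ hd₄ (fun i hi => ?_) hP hX hY
  · rw [getD_window_core q hn₁ (by omega)]; exact hone
  · rw [getD_window_core q hn₁ hdq]; exact hd
  · rw [← getD_take_of_lt hi, htake, getD_take_of_lt hi, getD_window_left (rc q) hR (by omega)]

theorem exists_window_of_hComp {e a n₁ n₂ X Y : ℕ} {q T : List Bool} (he : 3 ≤ e) (hq : Marked q)
    (hq' : Marked (rc q)) (hq₂ : ∃ f, OneOneAt q f) (hq₂' : ∃ f, OneOneAt (rc q) f)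
    (hn₁ : n₁ ≤ (e + 2) * a) (hn₂ : n₂ ≤ (e + 2) * a) (hP₁ : e + 2 ≤ n₁) (hP₂ : e + 2 ≤ n₂)
    (hX : n₁ ≤ (e + 2) * X) (hY : n₂ ≤ (e + 2) * Y)
    (hT : HComp (window e q a n₁ n₂) T) (hTa : T <:+: framed e q a a) :
    (∃ n, T = window e q a n₁ n ∧ n₂ ≤ n ∧ n ≤ (e + 2) * a ∧ n ≤ (e + 2) * (X + Y)) ∨
      (∃ n, T = window e q a n n₂ ∧ n₁ ≤ n ∧ n ≤ (e + 2) * a ∧ n ≤ (e + 2) * (X + Y)) := by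
  obtain ⟨ℓ, -, hℓ, rfl | rfl⟩ := hT
  · obtain ⟨hT, hR, hXY⟩ := window_append_rc_take he hq hq₂ hq₂' hn₁ hn₂ hℓ hP₁ hX hY hTa
    exact Or.inl ⟨n₂ + ℓ, hT, by omega, hR, hXY⟩
  · -- a left completion of `S` is the reverse complement of a right completion of `rc S`
    set S := window e q a n₁ n₂
    have hrc : rc (rc (S.drop (S.length - ℓ)) ++ S)
        = window e (rc q) a n₂ n₁ ++ rc ((window e (rc q) a n₂ n₁).take ℓ) := by
      rw [← rc_window, take_rc, rc_append, rc_rc]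
    have hTa' := hTa.rc
    rw [hrc, rc_framed] at hTa'
    obtain ⟨hT, hR, hXY⟩ := window_append_rc_take he hq' hq₂' (by simpa using hq₂) hn₂ hn₁
      (by rwa [← rc_window, rc_length]) hP₂ hY hX hTa'
    rw [← hrc, ← rc_window] at hT
    refine Or.inr ⟨n₁ + ℓ, ?_, by omega, hR, by rwa [add_comm X]⟩
    simpa using congrArg rc hT

theorem exists_window_of_hCompN {e k a : ℕ} {q : List Bool} (he : 3 ≤ e) (hk : 1 ≤ k)
    (hka : k ≤ a) (hq : Marked q) (hq' : Marked (rc q)) (hq₂ : ∃ f, OneOneAt q f)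
    (hq₂' : ∃ f, OneOneAt (rc q) f) (m : ℕ) (T : List Bool)
    (hT : HCompN m (framed e q k k) T) (hTa : T <:+: framed e q a a) :
    ∃ n₁ n₂ X Y, T = window e q a n₁ n₂ ∧ (e + 2) * k ≤ n₁ ∧ (e + 2) * k ≤ n₂ ∧
      n₁ ≤ (e + 2) * a ∧ n₂ ≤ (e + 2) * a ∧ n₁ ≤ (e + 2) * X ∧ n₂ ≤ (e + 2) * Y ∧
      FibBound k m X Y := by
  have hPk : (e + 2) * k ≤ (e + 2) * a := Nat.mul_le_mul_left _ hka
  have hP : e + 2 ≤ (e + 2) * k := Nat.le_mul_of_pos_right _ hk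
  induction m generalizing T with
  | zero =>
    have hT : T = window e q a ((e + 2) * k) ((e + 2) * k) :=
      ((window_eq_framed q hka).trans (show framed e q k k = T from hT)).symm
    exact ⟨_, _, k, k, hT, le_rfl, le_rfl, hPk, hPk, le_rfl, le_rfl, by simp [FibBound, Fib]⟩
  | succ m ih =>
    obtain ⟨U, hU, hUT⟩ := hCompN_succ_iff.mp hT
    obtain ⟨n₁, n₂, X, Y, rfl, h₁, h₂, hn₁, hn₂, hX, hY, hXY⟩ :=
      ih U hU (hUT.infix.trans hTa)
    rcases exists_window_of_hComp he hq hq' hq₂ hq₂' hn₁ hn₂ (by omega) (by omega) hX hY hUT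
      hTa with ⟨n, rfl, hn, hna, hnXY⟩ | ⟨n, rfl, hn, hna, hnXY⟩
    · exact ⟨n₁, n, X, X + Y, rfl, h₁, by omega, hn₁, hna, hX, hnXY, hXY.succ_of_le_add le_rfl⟩
    · exact ⟨n, n₂, X + Y, Y, rfl, by omega, h₂, hna, hn₂, hnXY, hY,
        (hXY.symm.succ_of_le_add (add_comm X Y).le).symm⟩

theorem le_Fib_mul_of_hCompN {e k a m : ℕ} {q : List Bool} (he : 3 ≤ e) (hk : 1 ≤ k)
    (hka : k ≤ a) (hq : Marked q) (hq' : Marked (rc q)) (hq₂ : ∃ f, OneOneAt q f)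
    (hq₂' : ∃ f, OneOneAt (rc q) f) (h : HCompN m (framed e q k k) (framed e q a a)) :
    a ≤ Fib m * k := by
  obtain ⟨n₁, n₂, X, Y, hw, -, -, hn₁, hn₂, hX, hY, hXY, -⟩ :=
    exists_window_of_hCompN he hk hka hq hq' hq₂ hq₂' m _ h (List.infix_refl _)
  have hlen := congrArg List.length hw
  rw [length_window q hn₁ hn₂] at hlen
  simp only [framed, List.length_append, length_repL_perBlock, length_repL_rc_perBlock] at hlen
  have haX : a ≤ X := Nat.le_of_mul_le_mul_left (by omega : (e + 2) * a ≤ (e + 2) * X) (by omega)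
  have haY : a ≤ Y := Nat.le_of_mul_le_mul_left (by omega : (e + 2) * a ≤ (e + 2) * Y) (by omega)
  exact (le_min haX haY).trans hXY

/-! ### Upper bound -/

theorem hComp_framed_right {e i j t : ℕ} (q : List Bool) (ht : 1 ≤ t) (hti : t ≤ i) :
    HComp (framed e q i j) (framed e q i (j + t)) := by
  have hPt : (e + 2) * t ≤ (e + 2) * i := Nat.mul_le_mul_left _ hti
  refine ⟨(e + 2) * t, Nat.mul_pos (by omega) ht, ?_, Or.inl ?_⟩
  · simp only [framed, List.length_append, length_repL_perBlock]; omega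
  · have htake : (framed e q i j).take ((e + 2) * t) = repL (perBlock e) t := by
      obtain ⟨s, rfl⟩ := Nat.exists_eq_add_of_le hti
      rw [framed, repL_add, List.append_assoc, List.append_assoc,
        List.take_left' (length_repL_perBlock e t)]
    rw [htake, rc_repL]
    simp only [framed, repL_add, List.append_assoc]

theorem hComp_framed_left {e i j t : ℕ} (q : List Bool) (ht : 1 ≤ t) (htj : t ≤ j) :
    HComp (framed e q i j) (framed e q (i + t) j) := by
  simpa only [rc_framed, rc_rc] using (hComp_framed_right (rc q) (i := j) (j := i) ht htj).rc

theorem exists_hCompN_framed_Fib {e k : ℕ} (q : List Bool) (hk : 1 ≤ k) (m : ℕ) :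
    ∃ i j, HCompN m (framed e q k k) (framed e q i j) ∧
      min i j = Fib m * k ∧ max i j = Fib (m + 1) * k := by
  induction m with
  | zero => exact ⟨k, k, rfl, by simp [Fib], by simp [Fib]⟩
  | succ m ih =>
    obtain ⟨i, j, h, hmin, hmax⟩ := ih
    have hFib : Fib (m + 1 + 1) * k = Fib (m + 1) * k + Fib m * k := add_mul _ _ _
    have hpos : 1 ≤ Fib (m + 1) * k := Nat.mul_pos (Fib_pos _) hk
    rcases le_total i j with hij | hji
    · rw [min_eq_left hij] at hmin
      rw [max_eq_right hij] at hmax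
      exact ⟨i + j, j, hCompN_succ_iff.mpr ⟨_, h, hComp_framed_left q (by omega) le_rfl⟩,
        by rw [min_eq_right (by omega)]; exact hmax, by rw [max_eq_left (by omega)]; omega⟩
    · rw [min_eq_right hji] at hmin
      rw [max_eq_left hji] at hmax
      exact ⟨i, j + i, hCompN_succ_iff.mpr ⟨_, h, hComp_framed_right q (by omega) le_rfl⟩,
        by rw [min_eq_left (by omega)]; exact hmax, by rw [max_eq_right (by omega)]; omega⟩

theorem hCompN_framed_of_Fib {e k a : ℕ} (q : List Bool) (hk : 1 ≤ k) (hka : k ≤ a) :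
    ∀ {m}, a ≤ Fib m * k → (∀ n < m, Fib n * k < a) →
      HCompN m (framed e q k k) (framed e q a a)
  | 0, hm, _ => by
    obtain rfl : a = k := le_antisymm (by simpa [Fib] using hm) hka
    rfl
  | 1, hm, hmin => absurd (hmin 0 one_pos) (by simpa [Fib] using hm)
  | m + 2, hm, hmin => by
    obtain ⟨i, j, h, hij, hji⟩ := exists_hCompN_framed_Fib (e := e) q hk m
    have hsum : i + j = Fib (m + 2) * k := by
      rw [← min_add_max, hij, hji, add_comm]; exact (add_mul _ _ _).symm
    have hmax := hmin (m + 1) (by omega)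
    have hi := le_max_left i j
    have hj := le_max_right i j
    have hright :=
      hComp_framed_right (e := e) q (i := i) (j := j) (t := a - j) (by omega) (by omega)
    have hleft := hComp_framed_left (e := e) q (i := i) (j := a) (t := a - i) (by omega) (by omega)
    rw [Nat.add_sub_cancel' (by omega)] at hright
    rw [Nat.add_sub_cancel' (by omega)] at hleft
    exact hCompN_succ_iff.mpr ⟨_, hCompN_succ_iff.mpr ⟨_, h, hright⟩, hleft⟩

/-- The hairpin completion distance from `per^k · q · ⟵per^k` to `per^a · q · ⟵per^a`
equals `Fib⁻¹(a/k)`. -/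
theorem HCD_eq_fibInv
    (e : ℕ) (he : 3 ≤ e) (u v : List Bool) (k a : ℕ)
    (hk : 1 ≤ k) (ha : k ≤ a)
    (per : List Bool) (hper : per = [false, true] ++ List.replicate e false)
    (q : List Bool)
    (hq : q = [false, true, false, true] ++ u ++ [true, true, false, false] ++ v ++
          [false, true, true, false, true]) :
    HCD (repL per k ++ q ++ repL (rc per) k) (repL per a ++ q ++ repL (rc per) a)
      = (FibInv ((a : ℝ) / (k : ℝ)) : ℕ∞) := by
  subst hper
  obtain ⟨hM, hM', hq₂, hq₂'⟩ : Marked q ∧ Marked (rc q) ∧ OneOneAt q (u.length + 4) ∧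
      OneOneAt (rc q) (v.length + 5) := by
    subst hq
    refine ⟨⟨rfl, 3, by omega, by omega, rfl⟩, ⟨?_, 4, by omega, le_rfl, ?_⟩, ?_, ?_⟩ <;>
      simp [rc, OneOneAt]
  have hne : {y | a ≤ Fib y * k}.Nonempty :=
    ⟨a, (le_Fib a).trans (Nat.le_mul_of_pos_right _ hk)⟩
  change HCD (framed e q k k) (framed e q a a) = _
  rw [FibInv_natCast_div hk]
  refine HCD_eq_of_minimal (hCompN_framed_of_Fib q hk ha (Nat.sInf_mem hne)
    fun _ hn => not_le.mp (Nat.notMem_of_lt_sInf (s := {y | a ≤ Fib y * k}) hn)) fun m hm => ?_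
  exact Nat.sInf_le (le_Fib_mul_of_hCompN he hk ha hM hM' ⟨_, hq₂⟩ ⟨_, hq₂'⟩ hm)
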